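/- Let f : ℝⁿ → ℝ be differentiable, bounded below on ℝⁿ, with gradient ∇f that is L-Lipschitz continuous on ℝⁿ for some L > 0. Fix constants τ, c₁, ρ ∈ (0,1) and ᾱ > 0. Let x_k, d_k, α_k be generated by the new conjugate gradient-like algorithm: g_k = ∇f(x_k) ≠ 0 for all k, d_0 = -g_0, d_k = -g_k + τ·(‖g_k‖/‖d_{k-1}‖)·d_{k-1} for k ≥ 1, x_{k+1} = x_k + α_k d_k, where each α_k > 0 satisfies the Armijo condition f(x_{k+1}) ≤ f(x_k) + c₁ α_k ⟨d_k, g_k⟩ and either α_k = ᾱ or (α_k ≤ ᾱ and f(x_k + ρ⁻¹α_k d_k) > f(x_k) + c₁ρ⁻¹α_k ⟨d_k, g_k⟩). Then ∑_{k=0}^∞ ‖g_k‖² < ∞. -/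

import Mathlib

/-!
The search directions satisfy `d = -g + w` with `‖w‖ ≤ τ‖g‖`, hence the sufficient descent
condition `⟪d, g⟫ ≤ -(1 - τ)‖g‖²` and the bound `‖d‖ ≤ (1 + τ)‖g‖`. With the quadratic upper
bound coming from the Lipschitz gradient, a failed Armijo test at `ρ⁻¹α` forces
`α ≥ ρ(1 - c₁)(1 - τ) / (L(1 + τ)²)`, so every step decreases `f` by at least a fixed multiple
of `‖g‖²`. Since `f` is bounded below, these decreases telescope to a convergent series.
-/

open RealInnerProductSpace

theorem norm_neg_add_le {E : Type*} [SeminormedAddCommGroup E] {τ : ℝ} {g w : E}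
    (hw : ‖w‖ ≤ τ * ‖g‖) : ‖-g + w‖ ≤ (1 + τ) * ‖g‖ :=
  calc ‖-g + w‖ ≤ ‖-g‖ + ‖w‖ := norm_add_le _ _
    _ ≤ (1 + τ) * ‖g‖ := by rw [norm_neg]; linarith

theorem norm_smul_div_norm_le {E : Type*} [NormedAddCommGroup E] [NormedSpace ℝ E] {τ a : ℝ}
    (hτ : 0 ≤ τ) (ha : 0 ≤ a) (d : E) :
    ‖(τ * (a / ‖d‖)) • d‖ ≤ τ * a := by
  rcases eq_or_ne d 0 with rfl | hd
  · simpa using mul_nonneg hτ ha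
  · rw [norm_smul, Real.norm_of_nonneg (by positivity), mul_assoc,
      div_mul_cancel₀ a (norm_ne_zero_iff.mpr hd)]

theorem mul_norm_sq_le_neg_inner_neg_add {E : Type*} [NormedAddCommGroup E]
    [InnerProductSpace ℝ E] {τ : ℝ} {g w : E} (hw : ‖w‖ ≤ τ * ‖g‖) :
    (1 - τ) * ‖g‖ ^ 2 ≤ -⟪-g + w, g⟫ := by
  have hwg : ⟪w, g⟫ ≤ τ * ‖g‖ ^ 2 :=
    calc ⟪w, g⟫ ≤ ‖w‖ * ‖g‖ := real_inner_le_norm w g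
      _ ≤ τ * ‖g‖ * ‖g‖ := by gcongr
      _ = τ * ‖g‖ ^ 2 := by ring
  rw [inner_add_left, inner_neg_left, real_inner_self_eq_norm_sq]
  linarith

section LineSearch

variable {E : Type*} [NormedAddCommGroup E] [InnerProductSpace ℝ E] [CompleteSpace E]
  {f : E → ℝ} {L : ℝ}

theorem le_add_inner_gradient_add_mul_norm_sq (hf : Differentiable ℝ f) (hL : 0 ≤ L)
    (hlip : ∀ x y, ‖gradient f x - gradient f y‖ ≤ L * ‖x - y‖) (x v : E) :
    f (x + v) ≤ f x + ⟪gradient f x, v⟫ + L * ‖v‖ ^ 2 := by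
  set φ : ℝ → ℝ := fun t => f (x + t • v)
  have hφ : ∀ t, HasDerivAt φ ⟪gradient f (x + t • v), v⟫ t := fun t => by
    have hline : HasDerivAt (fun t : ℝ => x + t • v) v t := by
      simpa using ((hasDerivAt_id t).smul_const v).const_add x
    exact (hf (x + t • v)).hasGradientAt.hasFDerivAt.comp_hasDerivAt t hline
  obtain ⟨c, hc, hslope⟩ := exists_hasDerivAt_eq_slope φ _ one_pos
    (fun t _ => (hφ t).continuousAt.continuousWithinAt) (fun t _ => hφ t)
  have hmvt : f (x + v) - f x = ⟪gradient f (x + c • v), v⟫ := by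
    simpa [φ] using hslope.symm
  have herr : ⟪gradient f (x + c • v) - gradient f x, v⟫ ≤ L * ‖v‖ ^ 2 :=
    calc ⟪gradient f (x + c • v) - gradient f x, v⟫
        ≤ ‖gradient f (x + c • v) - gradient f x‖ * ‖v‖ := real_inner_le_norm _ _
      _ ≤ L * ‖(x + c • v) - x‖ * ‖v‖ := by gcongr; exact hlip _ _
      _ = L * c * ‖v‖ ^ 2 := by
          rw [add_sub_cancel_left, norm_smul, Real.norm_of_nonneg hc.1.le]; ring
      _ ≤ L * 1 * ‖v‖ ^ 2 := by gcongr; exact hc.2.le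
      _ = L * ‖v‖ ^ 2 := by ring
  rw [inner_sub_left] at herr
  linarith

theorem lt_mul_norm_sq_of_armijo_fails (hf : Differentiable ℝ f) (hL : 0 ≤ L)
    (hlip : ∀ x y, ‖gradient f x - gradient f y‖ ≤ L * ‖x - y‖) {x d : E} {c₁ β : ℝ}
    (hβ : 0 < β) (hfail : f x + c₁ * β * ⟪d, gradient f x⟫ < f (x + β • d)) :
    (1 - c₁) * -⟪d, gradient f x⟫ < L * β * ‖d‖ ^ 2 := by
  have hquad := le_add_inner_gradient_add_mul_norm_sq hf hL hlip x (β • d)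
  rw [inner_smul_right, real_inner_comm, norm_smul, Real.norm_of_nonneg hβ.le] at hquad
  have : β * ((1 - c₁) * -⟪d, gradient f x⟫) < β * (L * β * ‖d‖ ^ 2) := by
    linarith
  exact lt_of_mul_lt_mul_left this hβ.le

theorem min_le_of_armijo_backtracking (hf : Differentiable ℝ f) (hL : 0 ≤ L)
    (hlip : ∀ x y, ‖gradient f x - gradient f y‖ ≤ L * ‖x - y‖) {x d : E}
    {c₁ ρ σ M α ᾱ : ℝ} (hc₁ : c₁ < 1) (hρ : 0 < ρ) (hα : 0 < α)
    (hdescent : σ * ‖gradient f x‖ ^ 2 ≤ -⟪d, gradient f x⟫)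
    (hbound : ‖d‖ ≤ M * ‖gradient f x‖)
    (hback : α = ᾱ ∨
      f x + c₁ * (ρ⁻¹ * α) * ⟪d, gradient f x⟫ < f (x + (ρ⁻¹ * α) • d)) :
    min ᾱ (ρ * (1 - c₁) * σ / (L * M ^ 2)) ≤ α := by
  rcases hback with rfl | hfail
  · exact min_le_left _ _
  refine min_le_of_right_le ?_
  have hlong := lt_mul_norm_sq_of_armijo_fails hf hL hlip (by positivity) hfail
  have hd_sq : ‖d‖ ^ 2 ≤ M ^ 2 * ‖gradient f x‖ ^ 2 := by
    rw [← mul_pow]; gcongr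
  have hG : ((1 - c₁) * σ) * ‖gradient f x‖ ^ 2 < (L * ρ⁻¹ * α * M ^ 2) * ‖gradient f x‖ ^ 2 :=
    calc ((1 - c₁) * σ) * ‖gradient f x‖ ^ 2
        ≤ (1 - c₁) * -⟪d, gradient f x⟫ := by
          rw [mul_assoc]; exact mul_le_mul_of_nonneg_left hdescent (by linarith)
      _ < L * (ρ⁻¹ * α) * ‖d‖ ^ 2 := hlong
      _ ≤ L * (ρ⁻¹ * α) * (M ^ 2 * ‖gradient f x‖ ^ 2) := by gcongr
      _ = (L * ρ⁻¹ * α * M ^ 2) * ‖gradient f x‖ ^ 2 := by ring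
  have hstep := lt_of_mul_lt_mul_right hG (sq_nonneg _)
  refine div_le_of_le_mul₀ (by positivity) hα.le ?_
  calc ρ * (1 - c₁) * σ ≤ ρ * (L * ρ⁻¹ * α * M ^ 2) := by
        rw [mul_assoc]; exact mul_le_mul_of_nonneg_left hstep.le hρ.le
    _ = α * (L * M ^ 2) := by field_simp

end LineSearch

theorem summable_of_mul_le_sub {a u : ℕ → ℝ} {C : ℝ} (hC : 0 < C) (ha : ∀ k, 0 ≤ a k)
    (hu : BddBelow (Set.range u)) (hdec : ∀ k, C * a k ≤ u k - u (k + 1)) :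
    Summable a := by
  obtain ⟨m, hm⟩ := hu
  refine summable_of_sum_range_le ha (c := (u 0 - m) / C) fun N => ?_
  rw [le_div_iff₀ hC]
  calc (∑ k ∈ Finset.range N, a k) * C = ∑ k ∈ Finset.range N, C * a k := by
        rw [Finset.sum_mul]; simp only [mul_comm]
    _ ≤ ∑ k ∈ Finset.range N, (u k - u (k + 1)) := Finset.sum_le_sum fun k _ => hdec k
    _ = u 0 - u N := Finset.sum_range_sub' u N
    _ ≤ u 0 - m := by linarith [hm (Set.mem_range_self N)]

theorem gradient_norm_sq_summable_general
    (n : ℕ) (f : EuclideanSpace ℝ (Fin n) → ℝ)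
    (hf : Differentiable ℝ f)
    (hbdd : BddBelow (Set.range f))
    (L : ℝ) (hL : 0 < L)
    (hlip : ∀ x y : EuclideanSpace ℝ (Fin n),
      ‖gradient f x - gradient f y‖ ≤ L * ‖x - y‖)
    (τ c₁ ρ : ℝ)
    (hτ : τ ∈ Set.Ioo (0 : ℝ) 1) (hc₁ : c₁ ∈ Set.Ioo (0 : ℝ) 1)
    (hρ : ρ ∈ Set.Ioo (0 : ℝ) 1)
    (ᾱ : ℝ) (hᾱ : 0 < ᾱ)
    (x d : ℕ → EuclideanSpace ℝ (Fin n)) (α : ℕ → ℝ)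
    (hd0 : d 0 = -gradient f (x 0))
    (hdk : ∀ k, d (k + 1) = -gradient f (x (k + 1)) +
      (τ * (‖gradient f (x (k + 1))‖ / ‖d k‖)) • d k)
    (hαpos : ∀ k, 0 < α k)
    (harmijo : ∀ k, f (x (k + 1)) ≤
      f (x k) + c₁ * α k * ⟪d k, gradient f (x k)⟫)
    (hbacktrack : ∀ k, α k = ᾱ ∨ (α k ≤ ᾱ ∧
      f (x k + (ρ⁻¹ * α k) • d k) >
        f (x k) + c₁ * (ρ⁻¹ * α k) * ⟪d k, gradient f (x k)⟫)) :
    Summable (fun k => ‖gradient f (x k)‖ ^ 2) := by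
  obtain ⟨hτ0, hτ1⟩ := hτ
  obtain ⟨hc0, hc1⟩ := hc₁
  have hdir : ∀ k, (1 - τ) * ‖gradient f (x k)‖ ^ 2 ≤ -⟪d k, gradient f (x k)⟫ ∧
      ‖d k‖ ≤ (1 + τ) * ‖gradient f (x k)‖ := by
    intro k
    obtain ⟨w, hw, hdw⟩ :
        ∃ w, ‖w‖ ≤ τ * ‖gradient f (x k)‖ ∧ d k = -gradient f (x k) + w := by
      rcases k with _ | k
      · exact ⟨0, by simpa using mul_nonneg hτ0.le (norm_nonneg _), by simp [hd0]⟩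
      · exact ⟨_, norm_smul_div_norm_le hτ0.le (norm_nonneg _) _, hdk k⟩
    rw [hdw]
    exact ⟨mul_norm_sq_le_neg_inner_neg_add hw, norm_neg_add_le hw⟩
  set αmin := min ᾱ (ρ * (1 - c₁) * (1 - τ) / (L * (1 + τ) ^ 2))
  have hαmin : 0 < αmin :=
    lt_min hᾱ (div_pos (by nlinarith [mul_pos hρ.1 (sub_pos.mpr hc1)]) (by positivity))
  refine summable_of_mul_le_sub (mul_pos (mul_pos hc0 hαmin) (sub_pos.mpr hτ1))
    (fun k => sq_nonneg _) (hbdd.mono (Set.range_comp_subset_range x f)) fun k => ?_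
  obtain ⟨hdescent, hbound⟩ := hdir k
  have hαk : αmin ≤ α k := min_le_of_armijo_backtracking hf hL.le hlip hc1 hρ.1 (hαpos k)
    hdescent hbound ((hbacktrack k).imp_right And.right)
  calc c₁ * αmin * (1 - τ) * ‖gradient f (x k)‖ ^ 2
      ≤ c₁ * α k * ((1 - τ) * ‖gradient f (x k)‖ ^ 2) := by
        rw [mul_assoc (c₁ * αmin)]; gcongr
    _ ≤ c₁ * α k * -⟪d k, gradient f (x k)⟫ := by gcongr; exact (mul_pos hc0 (hαpos k)).le
    _ ≤ f (x k) - f (x (k + 1)) := by linarith [harmijo k]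

theorem gradient_norm_sq_summable
    (n : ℕ) (f : EuclideanSpace ℝ (Fin n) → ℝ)
    (hf : Differentiable ℝ f)
    (hbdd : BddBelow (Set.range f))
    (L : ℝ) (hL : 0 < L)
    (hlip : ∀ x y : EuclideanSpace ℝ (Fin n),
      ‖gradient f x - gradient f y‖ ≤ L * ‖x - y‖)
    (τ c₁ ρ : ℝ)
    (hτ : τ ∈ Set.Ioo (0 : ℝ) 1) (hc₁ : c₁ ∈ Set.Ioo (0 : ℝ) 1)
    (hρ : ρ ∈ Set.Ioo (0 : ℝ) 1)
    (ᾱ : ℝ) (hᾱ : 0 < ᾱ)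
    (x d : ℕ → EuclideanSpace ℝ (Fin n)) (α : ℕ → ℝ)
    (hg : ∀ k, gradient f (x k) ≠ 0)
    (hd0 : d 0 = -gradient f (x 0))
    (hdk : ∀ k, d (k + 1) = -gradient f (x (k + 1)) +
      (τ * (‖gradient f (x (k + 1))‖ / ‖d k‖)) • d k)
    (hstep : ∀ k, x (k + 1) = x k + α k • d k)
    (hαpos : ∀ k, 0 < α k)
    (harmijo : ∀ k, f (x (k + 1)) ≤
      f (x k) + c₁ * α k * ⟪d k, gradient f (x k)⟫)
    (hbacktrack : ∀ k, α k = ᾱ ∨ (α k ≤ ᾱ ∧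
      f (x k + (ρ⁻¹ * α k) • d k) >
        f (x k) + c₁ * (ρ⁻¹ * α k) * ⟪d k, gradient f (x k)⟫)) :
    Summable (fun k => ‖gradient f (x k)‖ ^ 2) :=
  gradient_norm_sq_summable_general n f hf hbdd L hL hlip τ c₁ ρ hτ hc₁ hρ ᾱ hᾱ x d α hd0 hdk hαpos
    harmijo hbacktrack
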